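/- arXiv:0904.2152 — 7 statements merged into one kernel-verified Lean document; each statement's English description precedes it below -/
import Mathlib

section
/- Let F be a finite field with q elements and fix a, b, c, d, e ∈ F. Then the set { (1/x)·(a·x² − y² + b·x·y + c·y + e) + d : x, y ∈ F, x ≠ 0 } has at least q − 1 elements. -/
/-!
Along the line `y = μ x + ν` the value is `P(μ) x + K(ν) / x + const`, where
`P(μ) = a + b μ - μ²` and `K(ν) = e + c ν - ν²`. If `K` has a root and `P` a non-root (which exists
once `q > 2`), the values contain an affine image of `Fˣ`; if `P` has a root and `K` none, then
`e = K(0) ≠ 0` and the values contain the affine image `e / x + const` of `Fˣ`. If neither has a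
root, Chevalley–Warning gives a nontrivial zero of the homogenized conic
`a x² - y² + b x y + c y z + e z² = (t - d) x z`, which lies neither on `z = 0` nor on `x = 0`, so
every `t` is a value.
-/

open MvPolynomial

theorem MvPolynomial.exists_ne_zero_eval_eq_zero {K σ : Type*} [Field K] [Fintype K]
    [Fintype σ] [DecidableEq σ] {f : MvPolynomial σ K} (hf : f.totalDegree < Fintype.card σ)
    (h0 : eval 0 f = 0) : ∃ x : σ → K, x ≠ 0 ∧ eval x f = 0 := by
  classical
  obtain ⟨p, hp⟩ := CharP.exists K
  obtain ⟨x, hx⟩ := Fintype.exists_ne_of_one_lt_card ((CharP.char_is_prime K p).one_lt.trans_le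
    (Nat.le_of_dvd (Fintype.card_pos_iff.2 ⟨⟨0, h0⟩⟩) (char_dvd_card_solutions p hf))) ⟨0, h0⟩
  exact ⟨x, fun h => hx (Subtype.ext h), x.2⟩

section QuadraticForms

variable {F : Type*} [Field F]

theorem eq_zero_of_add_mul_sub_sq_eq_zero {a b x y : F} (hP : ∀ μ, a + b * μ - μ ^ 2 ≠ 0)
    (h : a * x ^ 2 + b * x * y - y ^ 2 = 0) : x = 0 ∧ y = 0 := by
  by_cases hx : x = 0
  · subst hx
    exact ⟨rfl, pow_eq_zero_iff two_ne_zero |>.1 (by linear_combination -h)⟩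
  · refine absurd ?_ (hP (y / x))
    field_simp
    linear_combination h

theorem exists_add_mul_sub_sq_ne_zero [Fintype F] (hF : 2 < Fintype.card F) (a b : F) :
    ∃ μ, a + b * μ - μ ^ 2 ≠ 0 := by
  classical
  by_contra! h
  have hroots : Finset.univ ⊆ ({0, b} : Finset F) := fun μ _ => by
    have hμ : μ * (μ - b) = 0 := by linear_combination h 0 - h μ
    rcases mul_eq_zero.1 hμ with h0 | hb
    · simp [h0]
    · simp [sub_eq_zero.1 hb]
  have := (Finset.card_le_card hroots).trans Finset.card_le_two
  simp only [Finset.card_univ] at this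
  omega

theorem exists_conic_point_of_no_roots [Fintype F] {a b c e s : F} (hP : ∀ μ, a + b * μ - μ ^ 2 ≠ 0)
    (hK : ∀ ν, e + c * ν - ν ^ 2 ≠ 0) :
    ∃ x y : F, x ≠ 0 ∧ a * x ^ 2 - y ^ 2 + b * x * y + c * y + e = s * x := by
  let Q : MvPolynomial (Fin 3) F := C a * (X 0 * X 0) - X 1 * X 1 + C b * (X 0 * X 1)
    + C c * (X 1 * X 2) + C e * (X 2 * X 2) - C s * (X 0 * X 2)
  have hXX (i j : Fin 3) : (X i * X j : MvPolynomial (Fin 3) F).IsHomogeneous 2 :=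
    (isHomogeneous_X F i).mul (isHomogeneous_X F j)
  have hQ : Q.IsHomogeneous 2 :=
    (((((hXX 0 0).C_mul a).sub (hXX 1 1)).add ((hXX 0 1).C_mul b)).add ((hXX 1 2).C_mul c)).add
      ((hXX 2 2).C_mul e) |>.sub ((hXX 0 2).C_mul s)
  obtain ⟨v, hv0, hv⟩ := exists_ne_zero_eval_eq_zero (hQ.totalDegree_le.trans_lt (by simp))
    (by simp [Q])
  simp only [Q, map_sub, map_add, map_mul, eval_C, eval_X] at hv
  have hx : v 0 ≠ 0 := by
    intro hx
    obtain ⟨hz, hy⟩ := eq_zero_of_add_mul_sub_sq_eq_zero hK (x := v 2) (y := v 1)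
      (by rw [hx] at hv; linear_combination hv)
    exact hv0 (funext fun i => by fin_cases i <;> assumption)
  have hz : v 2 ≠ 0 := fun hz =>
    hx (eq_zero_of_add_mul_sub_sq_eq_zero hP (x := v 0) (y := v 1)
      (by rw [hz] at hv; linear_combination hv)).1
  refine ⟨v 0 / v 2, v 1 / v 2, div_ne_zero hx hz, ?_⟩
  field_simp
  linear_combination hv

end QuadraticForms

theorem Set.card_sub_one_le_ncard_of_mul_add_mem {F : Type*} [Field F] [Fintype F] {s : Set F}
    {α β : F} (hα : α ≠ 0) (h : ∀ z ≠ 0, α * z + β ∈ s) : Fintype.card F - 1 ≤ s.ncard := by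
  calc Fintype.card F - 1 = ({0}ᶜ : Set F).ncard := by
        rw [Set.ncard_compl, Set.ncard_singleton, Nat.card_eq_fintype_card]
    _ ≤ s.ncard := Set.ncard_le_ncard_of_injOn (fun z => α * z + β) h
        fun u _ v _ huv => mul_left_cancel₀ hα (add_right_cancel huv)

section ValueSet

variable {F : Type*} [Field F] (a b c d e : F)

def valueSet : Set F :=
  {t | ∃ x y : F, x ≠ 0 ∧ t = x⁻¹ * (a * x ^ 2 - y ^ 2 + b * x * y + c * y + e) + d}

variable {a b c d e}

theorem mem_valueSet_of_line (μ ν : F) {x : F} (hx : x ≠ 0) :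
    (a + b * μ - μ ^ 2) * x + (e + c * ν - ν ^ 2) * x⁻¹ + ((b - 2 * μ) * ν + c * μ + d) ∈
      valueSet a b c d e :=
  ⟨x, μ * x + ν, hx, by field_simp; ring⟩

theorem valueSet_eq_univ [Fintype F] (hP : ∀ μ, a + b * μ - μ ^ 2 ≠ 0)
    (hK : ∀ ν, e + c * ν - ν ^ 2 ≠ 0) : valueSet a b c d e = Set.univ := by
  refine Set.eq_univ_of_forall fun t => ?_
  obtain ⟨x, y, hx, hxy⟩ := exists_conic_point_of_no_roots (s := t - d) hP hK
  exact ⟨x, y, hx, by rw [hxy]; field_simp; ring⟩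

end ValueSet

theorem stmt_3 (F : Type*) [Field F] [Fintype F] (a b c d e : F) :
    Fintype.card F - 1 ≤
      Set.ncard {t : F | ∃ x y : F, x ≠ 0 ∧
        t = x⁻¹ * (a * x ^ 2 - y ^ 2 + b * x * y + c * y + e) + d} := by
  change _ ≤ (valueSet a b c d e).ncard
  by_cases hF : Fintype.card F ≤ 2
  · have : 0 < (valueSet a b c d e).ncard :=
      (Set.ncard_pos (Set.toFinite _)).2 ⟨_, mem_valueSet_of_line 0 0 one_ne_zero⟩
    omega
  by_cases hK : ∃ ν, e + c * ν - ν ^ 2 = 0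
  · obtain ⟨ν, hν⟩ := hK
    obtain ⟨μ, hμ⟩ := exists_add_mul_sub_sq_ne_zero (by omega) a b
    refine Set.card_sub_one_le_ncard_of_mul_add_mem (β := (b - 2 * μ) * ν + c * μ + d) hμ
      fun z hz => ?_
    convert mem_valueSet_of_line μ ν hz using 1
    rw [hν]
    ring
  push Not at hK
  by_cases hP : ∃ μ, a + b * μ - μ ^ 2 = 0
  · obtain ⟨μ, hμ⟩ := hP
    refine Set.card_sub_one_le_ncard_of_mul_add_mem (β := c * μ + d) (by simpa using hK 0)
      fun z hz => ?_
    convert mem_valueSet_of_line μ 0 (inv_ne_zero hz) using 1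
    rw [hμ, inv_inv]
    ring
  push Not at hP
  rw [valueSet_eq_univ hP hK, Set.ncard_univ, Nat.card_eq_fintype_card]
  omega
end

section
/- Let F be a finite field with q elements and fix a, b, c, d, e ∈ F. Then for at least q − 1 distinct values of f ∈ F, the equation a·x² − y² + b·x·y + c·y + (d − f)·x + e = 0 has a solution (x, y) ∈ F × F with x ≠ 0. -/
/-!
Put `p = d - f` and substitute `(x, y) = (1/u, w/u)`: a solution of
`e u² + (c w + p) u + h w = 0` with `u ≠ 0`, where `h w = a + b w - w²`, gives a point
with `x ≠ 0`, so it suffices to show that at most one `p` admits no such solution.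
If `e = 0` (resp. `e ≠ 0`) and some `h w₀` is nonzero (resp. zero), fixing `w = w₀` leaves an
equation in `u` that is solvable for all `p ≠ -c w₀`. Otherwise `e ≠ 0` and `h` has no roots, so
every root `u` is nonzero. In odd characteristic we need `w` making the discriminant
`(c w + p)² - 4 e h w` a square: it is a quadratic in `w` unless `c² + 4e = 0`, and then it is
linear in `w` for `p ≠ -c b / 2`. In characteristic two, `c ≠ 0` is handled by taking
`u = b / c`, which kills the `w`-linear term, and `c = 0` by an additive counting argument.
-/

open Finset Polynomial

section

variable {F : Type*} [Field F]

def HasPointOffYAxis (a b c p e : F) : Prop :=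
  ∃ x y : F, x ≠ 0 ∧ a * x ^ 2 - y ^ 2 + b * x * y + c * y + p * x + e = 0

def exceptionalSet (a b c e : F) : Set F := {p | ¬ HasPointOffYAxis a b c p e}

variable {a b c e p u w : F}

theorem hasPointOffYAxis_of_inv (hu : u ≠ 0)
    (h : e * u ^ 2 + (c * w + p) * u + (a + b * w - w ^ 2) = 0) :
    HasPointOffYAxis a b c p e :=
  ⟨u⁻¹, w * u⁻¹, inv_ne_zero hu, by field_simp; linear_combination h⟩

theorem exceptionalSet_subsingleton_of_forall_ne (p₀ : F)
    (h : ∀ p ≠ p₀, HasPointOffYAxis a b c p e) : (exceptionalSet a b c e).Subsingleton :=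
  Set.subsingleton_of_forall_eq p₀ fun p hp => not_imp_comm.1 (h p) hp

theorem hasPointOffYAxis_of_root (he : e ≠ 0) (hw : a + b * w - w ^ 2 = 0)
    (hp : c * w + p ≠ 0) : HasPointOffYAxis a b c p e :=
  hasPointOffYAxis_of_inv (u := -(c * w + p) / e) (w := w) (div_ne_zero (neg_ne_zero.2 hp) he)
    (by rw [hw]; field_simp; ring)

theorem hasPointOffYAxis_zero (hw : a + b * w - w ^ 2 ≠ 0) (hp : c * w + p ≠ 0) :
    HasPointOffYAxis a b c p 0 :=
  hasPointOffYAxis_of_inv (u := -(a + b * w - w ^ 2) / (c * w + p)) (w := w)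
    (div_ne_zero (neg_ne_zero.2 hw) hp) (by rw [zero_mul, zero_add, mul_div_cancel₀ _ hp]; ring)

theorem exceptionalSet_zero_subsingleton (a b c : F) :
    (exceptionalSet a b c 0).Subsingleton := by
  by_cases hh : ∃ w, a + b * w - w ^ 2 ≠ 0
  · obtain ⟨w, hw⟩ := hh
    exact exceptionalSet_subsingleton_of_forall_ne (-(c * w)) fun p hp =>
      hasPointOffYAxis_zero hw (by contrapose! hp; linear_combination hp)
  push Not at hh
  have h01 (w : F) : w = 0 ∨ w = 1 := by
    have : w * (1 - w) = 0 := by linear_combination hh w - hh 0 - w * (hh 1 - hh 0)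
    rcases mul_eq_zero.1 this with h | h
    exacts [.inl h, .inr (by linear_combination -h)]
  refine Set.subsingleton_of_forall_eq 1 fun p hp => (h01 p).resolve_left ?_
  rintro rfl
  exact hp (hasPointOffYAxis_of_inv (u := 1) (w := 0) one_ne_zero (by linear_combination hh 0))

theorem hasPointOffYAxis_of_discrim [NeZero (2 : F)] (he : e ≠ 0) (hw : a + b * w - w ^ 2 ≠ 0)
    (hs : ∃ s, discrim e (c * w + p) (a + b * w - w ^ 2) = s * s) :
    HasPointOffYAxis a b c p e := by
  obtain ⟨u, hu⟩ := exists_quadratic_eq_zero he hs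
  refine hasPointOffYAxis_of_inv (u := u) (w := w) ?_ (by linear_combination hu)
  rintro rfl
  exact hw (by simpa using hu)

theorem exists_discrim_eq_sq [Fintype F] (hF : ringChar F ≠ 2) (hce : c ^ 2 + 4 * e ≠ 0)
    (p : F) :
    ∃ w s, discrim e (c * w + p) (a + b * w - w ^ 2) = s * s := by
  obtain ⟨w, s, h⟩ := FiniteField.exists_root_sum_quadratic
    (f := C (c ^ 2 + 4 * e) * X ^ 2 + C (2 * c * p - 4 * e * b) * X + C (p ^ 2 - 4 * e * a))
    (g := C (-1) * X ^ 2 + C 0 * X + C 0) (degree_quadratic hce)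
    (degree_quadratic (neg_ne_zero.2 one_ne_zero)) (FiniteField.odd_card_of_char_ne_two hF)
  refine ⟨w, s, ?_⟩
  simp only [eval_add, eval_mul, eval_pow, eval_C, eval_X] at h
  rw [discrim]
  linear_combination h

theorem exists_discrim_eq_zero (hce : c ^ 2 + 4 * e = 0) (hp : c * (2 * p + c * b) ≠ 0) :
    ∃ w, discrim e (c * w + p) (a + b * w - w ^ 2) = 0 * 0 := by
  set w := -(p ^ 2 - 4 * e * a) / (c * (2 * p + c * b))
  have hw : c * (2 * p + c * b) * w = -(p ^ 2 - 4 * e * a) := mul_div_cancel₀ _ hp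
  exact ⟨w, by rw [discrim]; linear_combination (w ^ 2 - b * w) * hce + hw⟩

theorem exceptionalSet_subsingleton_of_ringChar_ne_two [Fintype F] (hF : ringChar F ≠ 2)
    (he : e ≠ 0) (hh : ∀ w, a + b * w - w ^ 2 ≠ 0) : (exceptionalSet a b c e).Subsingleton := by
  have : NeZero (2 : F) := ⟨Ring.two_ne_zero hF⟩
  by_cases hce : c ^ 2 + 4 * e = 0
  · have hc : c ≠ 0 := by
      rintro rfl
      have : (2 : F) * 2 * e = 0 := by linear_combination hce
      exact he ((mul_eq_zero.1 this).resolve_left (mul_ne_zero two_ne_zero two_ne_zero))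
    refine exceptionalSet_subsingleton_of_forall_ne (-(c * b) / 2) fun p hp => ?_
    have hp' : c * (2 * p + c * b) ≠ 0 :=
      mul_ne_zero hc fun h => hp (by field_simp; linear_combination h)
    obtain ⟨w, hw⟩ := exists_discrim_eq_zero (a := a) hce hp'
    exact hasPointOffYAxis_of_discrim he (hh w) ⟨0, hw⟩
  · refine exceptionalSet_subsingleton_of_forall_ne 0 fun p _ => ?_
    obtain ⟨w, hw⟩ := exists_discrim_eq_sq (a := a) (b := b) hF hce p
    exact hasPointOffYAxis_of_discrim he (hh w) hw

theorem hasPointOffYAxis_of_charTwo [Finite F] [CharP F 2] (hb : b ≠ 0) (hc : c ≠ 0)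
    (p : F) : HasPointOffYAxis a b c p e := by
  obtain ⟨r, hr⟩ := isSquare_of_charTwo' (e * (b / c) ^ 2 + p * (b / c) + a)
  have hcb : c * (b / c) = b := mul_div_cancel₀ b hc
  exact hasPointOffYAxis_of_inv (u := b / c) (w := r) (div_ne_zero hb hc)
    (by linear_combination hr + r * hcb + b * r * CharTwo.two_eq_zero (R := F))

theorem card_le_two_mul_card_image_quadratic [Fintype F] [DecidableEq F] {α : F} (hα : α ≠ 0)
    (β γ : F) : Fintype.card F ≤ 2 * #(univ.image fun x => α * x ^ 2 + β * x + γ) := by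
  have := FiniteField.card_image_polynomial_eval
    (p := C α * X ^ 2 + C β * X + C γ) (by rw [degree_quadratic hα]; decide)
  rw [natDegree_quadratic hα] at this
  simpa using this

theorem sub_mem_image_quadratic_of_charTwo [CharP F 2] [Fintype F] [DecidableEq F] (α β : F)
    {x y : F}
    (hx : x ∈ univ.image fun u => α * u ^ 2 + β * u)
    (hy : y ∈ univ.image fun u => α * u ^ 2 + β * u) :
    x - y ∈ univ.image fun u => α * u ^ 2 + β * u := by
  obtain ⟨u, -, rfl⟩ := mem_image.1 hx
  obtain ⟨v, -, rfl⟩ := mem_image.1 hy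
  refine mem_image.2 ⟨u - v, mem_univ _, ?_⟩
  linear_combination α * v * (v - u) * CharTwo.two_eq_zero (R := F)

theorem exceptionalSet_subsingleton_of_charTwo_of_c_zero [Fintype F] [CharP F 2] (he : e ≠ 0)
    (hh : ∀ w, a + b * w - w ^ 2 ≠ 0) : (exceptionalSet a b 0 e).Subsingleton := by
  classical
  -- `V p` and `W` have at least `q / 2` elements each, and `V p` is an additive subgroup.
  set V : F → Finset F := fun p => univ.image fun u => e * u ^ 2 + p * u
  set W : Finset F := univ.image fun w => w ^ 2 - b * w - a
  have hdisj : ∀ p ∈ exceptionalSet a b 0 e, Disjoint (V p) W := by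
    intro p hp
    refine disjoint_left.2 ?_
    simp only [V, W, mem_image, mem_univ, true_and]
    rintro _ ⟨u, rfl⟩ ⟨w, hw⟩
    refine hp (hasPointOffYAxis_of_inv (u := u) (w := w) ?_ (by linear_combination -hw))
    rintro rfl
    exact hh w (by linear_combination -hw)
  have hV : ∀ p ∈ exceptionalSet a b 0 e, V p = Wᶜ := by
    intro p hp
    refine eq_of_subset_of_card_le (subset_compl_iff_disjoint_right.2 (hdisj p hp)) ?_
    have hVcard : Fintype.card F ≤ 2 * #(V p) := by
      simpa using card_le_two_mul_card_image_quadratic he p 0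
    have hWcard : Fintype.card F ≤ 2 * #W := by
      simpa [W, sub_eq_add_neg] using card_le_two_mul_card_image_quadratic one_ne_zero (-b) (-a)
    rw [card_compl]
    omega
  intro p₁ h₁ p₂ h₂
  by_contra hne
  set t := -a / (p₁ - p₂)
  have ht : (p₁ - p₂) * t = -a := mul_div_cancel₀ _ (sub_ne_zero.2 hne)
  have h₂₁ : e * t ^ 2 + p₂ * t ∈ V p₁ := by
    rw [hV p₁ h₁, ← hV p₂ h₂]
    exact mem_image_of_mem _ (mem_univ t)
  have ha : -a ∈ V p₁ := by
    have := sub_mem_image_quadratic_of_charTwo e p₁ (mem_image_of_mem _ (mem_univ t)) h₂₁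
    rwa [show e * t ^ 2 + p₁ * t - (e * t ^ 2 + p₂ * t) = -a by linear_combination ht] at this
  exact disjoint_left.1 (hdisj p₁ h₁) ha (mem_image.2 ⟨0, mem_univ _, by ring⟩)

theorem exceptionalSet_subsingleton_of_charTwo [Fintype F] [CharP F 2] (he : e ≠ 0)
    (hh : ∀ w, a + b * w - w ^ 2 ≠ 0) : (exceptionalSet a b c e).Subsingleton := by
  have hb : b ≠ 0 := by
    rintro rfl
    obtain ⟨r, hr⟩ := isSquare_of_charTwo' a
    exact hh r (by rw [hr]; ring)
  rcases eq_or_ne c 0 with rfl | hc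
  · exact exceptionalSet_subsingleton_of_charTwo_of_c_zero he hh
  · exact exceptionalSet_subsingleton_of_forall_ne 0 fun p _ => hasPointOffYAxis_of_charTwo hb hc p

theorem exceptionalSet_subsingleton [Fintype F] (a b c e : F) :
    (exceptionalSet a b c e).Subsingleton := by
  rcases eq_or_ne e 0 with rfl | he
  · exact exceptionalSet_zero_subsingleton a b c
  by_cases hroot : ∃ w, a + b * w - w ^ 2 = 0
  · obtain ⟨w, hw⟩ := hroot
    exact exceptionalSet_subsingleton_of_forall_ne (-(c * w)) fun p hp =>
      hasPointOffYAxis_of_root he hw (by contrapose! hp; linear_combination hp)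
  push Not at hroot
  by_cases hF : ringChar F = 2
  · have := ringChar.of_eq hF
    exact exceptionalSet_subsingleton_of_charTwo he hroot
  · exact exceptionalSet_subsingleton_of_ringChar_ne_two hF he hroot

end

theorem stmt_4 (F : Type*) [Field F] [Fintype F] (a b c d e : F) :
    Fintype.card F - 1 ≤
      Set.ncard {f : F | ∃ x y : F, x ≠ 0 ∧
        a * x ^ 2 - y ^ 2 + b * x * y + c * y + (d - f) * x + e = 0} := by
  set S := {f : F | ∃ x y : F, x ≠ 0 ∧
    a * x ^ 2 - y ^ 2 + b * x * y + c * y + (d - f) * x + e = 0}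
  have hSc : Sᶜ.Subsingleton := (exceptionalSet_subsingleton a b c e).preimage sub_right_injective
  have hS := Set.ncard_add_ncard_compl S
  rw [Nat.card_eq_fintype_card] at hS
  have := Set.ncard_le_one_iff_subsingleton.2 hSc
  omega
end

section
/- Let F be a field and let D₁ = diag(u₁, v₁), D₂ = diag(u₂, v₂) be 2×2 diagonal matrices over F with u₁ ≠ v₁ and u₂ ≠ v₂. For x ∈ F, let D be any 2×2 matrix [[a,b],[c,d]] with a·d = x and b·c = x − 1 (so det D = 1). Then Trace(D⁻¹ D₁ D · D₂) = x·(u₁ − v₁)·(u₂ − v₂) + (Trace(D₁D₂) − (u₁ − v₁)·(u₂ − v₂)). In particular, as x ranges over F, Trace(D⁻¹ D₁ D · D₂) takes all q values of F when F has q elements. -/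
theorem stmt_11 (F : Type*) [Field F] [Fintype F] (u₁ v₁ u₂ v₂ : F)
    (hu₁ : u₁ ≠ v₁) (hu₂ : u₂ ≠ v₂) :
    (∀ x a b c d : F, a * d = x → b * c = x - 1 →
      Matrix.trace ((!![a, b; c, d])⁻¹ * !![u₁, 0; 0, v₁] * !![a, b; c, d] *
          !![u₂, 0; 0, v₂]) =
        x * (u₁ - v₁) * (u₂ - v₂) +
          (Matrix.trace (!![u₁, 0; 0, v₁] * !![u₂, 0; 0, v₂]) -
            (u₁ - v₁) * (u₂ - v₂))) ∧
    (∀ t : F, ∃ x a b c d : F, a * d = x ∧ b * c = x - 1 ∧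
      Matrix.trace ((!![a, b; c, d])⁻¹ * !![u₁, 0; 0, v₁] * !![a, b; c, d] *
          !![u₂, 0; 0, v₂]) = t) := by
  have key : ∀ x a b c d : F, a * d = x → b * c = x - 1 →
      Matrix.trace ((!![a, b; c, d])⁻¹ * !![u₁, 0; 0, v₁] * !![a, b; c, d] *
          !![u₂, 0; 0, v₂]) =
        x * (u₁ - v₁) * (u₂ - v₂) +
          (Matrix.trace (!![u₁, 0; 0, v₁] * !![u₂, 0; 0, v₂]) -
            (u₁ - v₁) * (u₂ - v₂)) := by
    intro x a b c d had hbc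
    have hdet : (!![a, b; c, d]).det = 1 := by
      simp [Matrix.det_fin_two_of, had, hbc]
    have hinv : (!![a, b; c, d])⁻¹ = !![d, -b; -c, a] := by
      rw [Matrix.inv_def, hdet, Matrix.adjugate_fin_two]
      simp
    rw [hinv]
    have h1 : a * d - b * c = 1 := by rw [had, hbc]; ring
    simp [Matrix.trace_fin_two, Matrix.mul_apply, Fin.sum_univ_two]
    linear_combination (u₁*u₂ + v₁*v₂) * had - (v₁*u₂ + u₁*v₂) * hbc
  refine ⟨key, fun t => ?_⟩
  have h1 : u₁ - v₁ ≠ 0 := sub_ne_zero.mpr hu₁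
  have h2 : u₂ - v₂ ≠ 0 := sub_ne_zero.mpr hu₂
  set C := Matrix.trace (!![u₁, 0; 0, v₁] * !![u₂, 0; 0, v₂]) - (u₁ - v₁) * (u₂ - v₂) with hC
  set X := (t - C) / ((u₁ - v₁) * (u₂ - v₂)) with hX
  refine ⟨X, 1, 1, X - 1, X, by ring, by ring, ?_⟩
  rw [key X 1 1 (X - 1) X (by ring) (by ring), hX]
  field_simp
  ring
end

section
/- Let F be a finite field with q elements and let A, B be non-scalar diagonal matrices in GL(n, q), n ≥ 2. Then the product of conjugacy classes A^G · B^G in G = GL(n, q) is a union of at least q distinct conjugacy classes. -/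
/-!
Write `a`, `b` for the diagonals of `A`, `B` and choose indices `i ≠ j` at which both take
different values. Conjugating `A` by the transvections `1 + t E_ij` and `B` by `1 + E_ji` gives
`A + t (a_j - a_i) E_ij ∈ A^G` and `B + (b_i - b_j) E_ji ∈ B^G`, whose product has trace
`tr (AB) + t (a_j - a_i)(b_i - b_j)`. As `t` runs over `F` these traces are pairwise distinct,
so the products lie in `q` distinct conjugacy classes.
-/

open Pointwise Matrix

theorem exists_apply_ne_and_apply_ne {ι α β : Type*} {f : ι → α} {g : ι → β}
    (hf : ∃ i j, f i ≠ f j) (hg : ∃ i j, g i ≠ g j) :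
    ∃ i j, f i ≠ f j ∧ g i ≠ g j := by
  by_contra! h
  obtain ⟨i, j, hij⟩ := hf
  obtain ⟨k, l, hkl⟩ := hg
  have hconst : ∀ x, g x = g i := fun x => by
    by_cases hx : f x = f i
    · rw [h x j (hx ▸ hij), h i j hij]
    · exact h x i hx
  exact hkl ((hconst k).trans (hconst l).symm)

namespace Matrix

variable {ι R : Type*} [DecidableEq ι]

theorem exists_apply_ne_of_diagonal_ne_smul_one [Semiring R] {d : ι → R}
    (h : ¬∃ c : R, diagonal d = c • 1) : ∃ i j, d i ≠ d j := by
  by_contra! hd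
  refine h ?_
  rcases isEmpty_or_nonempty ι with hι | ⟨⟨i⟩⟩
  · exact ⟨0, Subsingleton.elim _ _⟩
  · exact ⟨d i, by rw [smul_one_eq_diagonal]; exact congrArg diagonal (funext fun j => hd j i)⟩

variable [Fintype ι]

theorem single_mul_diagonal [CommSemiring R] (i j : ι) (c : R) (d : ι → R) :
    single i j c * diagonal d = single i j (c * d j) := by
  ext a b
  simp only [mul_diagonal, single_apply]
  split_ifs <;> simp_all

theorem diagonal_mul_single [CommSemiring R] (i j : ι) (c : R) (d : ι → R) :
    diagonal d * single i j c = single i j (d i * c) := by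
  ext a b
  simp only [diagonal_mul, single_apply]
  split_ifs <;> simp_all

theorem transvection_mul_diagonal_mul_transvection_neg [CommRing R] {i j : ι} (hij : i ≠ j)
    (c : R) (d : ι → R) :
    transvection i j c * diagonal d * transvection i j (-c) =
      diagonal d + single i j (c * (d j - d i)) := by
  simp only [transvection, add_mul, mul_add, one_mul, mul_one, single_mul_diagonal,
    diagonal_mul_single, single_mul_single_of_ne _ _ _ _ hij.symm, add_zero, add_assoc,
    ← single_add]
  ring_nf

theorem trace_diagonal_add_single_mul_diagonal_add_single [CommSemiring R] {i j : ι}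
    (hij : i ≠ j) (d e : ι → R) (a b : R) :
    trace ((diagonal d + single i j a) * (diagonal e + single j i b)) =
      trace (diagonal d * diagonal e) + a * b := by
  simp [mul_add, add_mul, trace_add, trace_single_mul, trace_mul_single, hij, hij.symm]

namespace GeneralLinearGroup

variable [CommRing R]

theorem exists_isConj_val_eq (A : GL ι R) {P Q : Matrix ι ι R} (h : P * Q = 1) :
    ∃ X : GL ι R, IsConj A X ∧ (X : Matrix ι ι R) = P * A * Q :=
  let u : GL ι R := ⟨P, Q, h, mul_eq_one_comm.mp h⟩
  ⟨u * A * u⁻¹, isConj_iff.mpr ⟨u, rfl⟩, rfl⟩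

theorem exists_isConj_val_eq_diagonal_add_single {A : GL ι R} {d : ι → R}
    (hA : (A : Matrix ι ι R) = diagonal d) {i j : ι} (hij : i ≠ j) (c : R) :
    ∃ X : GL ι R, IsConj A X ∧
      (X : Matrix ι ι R) = diagonal d + single i j (c * (d j - d i)) := by
  rw [← transvection_mul_diagonal_mul_transvection_neg hij, ← hA]
  exact exists_isConj_val_eq A (by
    rw [transvection_mul_transvection_same _ _ hij, add_neg_cancel, transvection_zero])

theorem trace_eq_of_isConj {X Y : GL ι R} (h : IsConj X Y) :
    trace (X : Matrix ι ι R) = trace (Y : Matrix ι ι R) := by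
  obtain ⟨c, rfl⟩ := isConj_iff.mp h
  exact (trace_units_conj c X).symm

end GeneralLinearGroup

end Matrix

theorem card_le_ncard_image_conjClasses {G α β : Type*} [Group G] [Finite G] {S : Set G}
    (f : α → G) (hf : ∀ a, f a ∈ S) (χ : G → β)
    (hχ : ∀ g h, IsConj g h → χ g = χ h)
    (hinj : Function.Injective (χ ∘ f)) : Nat.card α ≤ (ConjClasses.mk '' S).ncard := by
  have hmk : Function.Injective (ConjClasses.mk ∘ f) := fun a b hab =>
    hinj (hχ _ _ (ConjClasses.mk_eq_mk_iff_isConj.mp hab))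
  calc Nat.card α = (Set.range (ConjClasses.mk ∘ f)).ncard :=
        (Set.ncard_range_of_injective hmk).symm
    _ ≤ (ConjClasses.mk '' S).ncard := by
      refine Set.ncard_le_ncard ?_ (Set.toFinite _)
      rintro _ ⟨a, rfl⟩
      exact ⟨f a, hf a, rfl⟩

theorem stmt_12_general (F : Type*) [Field F] [Fintype F] (n : ℕ)
    (A B : Matrix.GeneralLinearGroup (Fin n) F)
    (dA dB : Fin n → F)
    (hA : (A : Matrix (Fin n) (Fin n) F) = Matrix.diagonal dA)
    (hB : (B : Matrix (Fin n) (Fin n) F) = Matrix.diagonal dB)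
    (hAns : ¬ ∃ lam : F, (A : Matrix (Fin n) (Fin n) F) = lam • (1 : Matrix (Fin n) (Fin n) F))
    (hBns : ¬ ∃ lam : F, (B : Matrix (Fin n) (Fin n) F) = lam • (1 : Matrix (Fin n) (Fin n) F)) :
    Fintype.card F ≤ Set.ncard
      (ConjClasses.mk '' ({X | IsConj A X} * {X | IsConj B X})) := by
  obtain ⟨i, j, hdA, hdB⟩ := exists_apply_ne_and_apply_ne
    (exists_apply_ne_of_diagonal_ne_smul_one (hA ▸ hAns))
    (exists_apply_ne_of_diagonal_ne_smul_one (hB ▸ hBns))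
  have hij : i ≠ j := fun h => hdA (h ▸ rfl)
  choose X hAX hX using fun t : F =>
    GeneralLinearGroup.exists_isConj_val_eq_diagonal_add_single hA hij t
  obtain ⟨Y, hBY, hY⟩ :=
    GeneralLinearGroup.exists_isConj_val_eq_diagonal_add_single hB hij.symm 1
  have htrace : ∀ t, trace ((X t * Y : GL (Fin n) F) : Matrix (Fin n) (Fin n) F) =
      trace (diagonal dA * diagonal dB) + t * ((dA j - dA i) * (dB i - dB j)) := fun t => by
    rw [Units.val_mul, hX, hY, trace_diagonal_add_single_mul_diagonal_add_single hij]
    ring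
  have hslope : (dA j - dA i) * (dB i - dB j) ≠ 0 :=
    mul_ne_zero (sub_ne_zero.2 (Ne.symm hdA)) (sub_ne_zero.2 hdB)
  rw [← Nat.card_eq_fintype_card]
  refine card_le_ncard_image_conjClasses (fun t => X t * Y)
    (fun t => Set.mul_mem_mul (hAX t) hBY) (fun g => trace (g : Matrix (Fin n) (Fin n) F))
    (fun _ _ => GeneralLinearGroup.trace_eq_of_isConj) fun s t hst => ?_
  simp only [Function.comp_apply, htrace, add_right_inj] at hst
  exact mul_right_cancel₀ hslope hst

theorem stmt_12 (F : Type*) [Field F] [Fintype F] (n : ℕ) (hn : 2 ≤ n)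
    (A B : Matrix.GeneralLinearGroup (Fin n) F)
    (dA dB : Fin n → F)
    (hA : (A : Matrix (Fin n) (Fin n) F) = Matrix.diagonal dA)
    (hB : (B : Matrix (Fin n) (Fin n) F) = Matrix.diagonal dB)
    (hAns : ¬ ∃ lam : F, (A : Matrix (Fin n) (Fin n) F) = lam • (1 : Matrix (Fin n) (Fin n) F))
    (hBns : ¬ ∃ lam : F, (B : Matrix (Fin n) (Fin n) F) = lam • (1 : Matrix (Fin n) (Fin n) F)) :
    Fintype.card F ≤ Set.ncard
      (ConjClasses.mk '' ({X | IsConj A X} * {X | IsConj B X})) :=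
  stmt_12_general F n A B dA dB hA hB hAns hBns
end

section
/- Let S = SL(n, q) be the group of n×n matrices of determinant 1 over a finite field with q elements, n ≥ 2, and let A, B ∈ S. Then either (i) at least one of A, B is a scalar matrix and A^S · B^S = (AB)^S, or (ii) A^S · B^S is a union of at least ⌈q/2⌉ distinct conjugacy classes of S. -/
/-!
If `A` (or `B`) is central, its conjugacy class is `{A}` and the product of the two classes is the
class of `AB`. Otherwise `A` and `B` each move a point of the projective space (the kernel of the
action is the centre), on which `SL` acts transitively, so after conjugating `A` to some `A'` there
is a vector `v` such that neither `A' v` nor `B v` lies on the line through `v`. Pick `w` with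
`w ⬝ᵥ v = 0`, `w ⬝ᵥ A' v ≠ 0` and `w ⬝ᵥ B v ≠ 0`, and let `T t = 1 + t v wᵀ`. The elements
`T t A' (T t)⁻¹ B` lie in `A^S B^S` and their trace is a quadratic polynomial in `t` with leading
coefficient `-(w ⬝ᵥ A' v) (w ⬝ᵥ B v) ≠ 0`. Such a polynomial takes at least `⌈q/2⌉` values, and the
trace is constant on conjugacy classes.
-/

open Pointwise

section Conjugacy

variable {G : Type*} [Group G]

theorem conjugatesOf_eq_singleton_of_mem_center {z : G} (hz : z ∈ Subgroup.center G) :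
    conjugatesOf z = {z} :=
  Set.ext fun _ => ⟨fun h => (h.eq_of_left_mem_center hz).symm, fun h => h ▸ IsConj.refl z⟩

theorem image_mul_left_conjugatesOf_of_mem_center {z : G} (hz : z ∈ Subgroup.center G) (b : G) :
    (z * ·) '' conjugatesOf b = conjugatesOf (z * b) := by
  have hconj (c : G) : c * (z * b) * c⁻¹ = z * (c * b * c⁻¹) := by
    rw [← mul_assoc c, Subgroup.mem_center_iff.mp hz c]
    group
  ext x
  simp only [Set.mem_image, conjugatesOf, Set.mem_ofPred_eq, isConj_iff, hconj]
  exact ⟨fun ⟨_, ⟨c, hc⟩, hx⟩ => ⟨c, hc ▸ hx⟩, fun ⟨c, hc⟩ => ⟨_, ⟨c, rfl⟩, hc⟩⟩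

theorem conjugatesOf_mul_conjugatesOf_of_mem_center_left {z : G} (hz : z ∈ Subgroup.center G)
    (b : G) : conjugatesOf z * conjugatesOf b = conjugatesOf (z * b) := by
  rw [conjugatesOf_eq_singleton_of_mem_center hz, Set.singleton_mul,
    image_mul_left_conjugatesOf_of_mem_center hz]

theorem conjugatesOf_mul_conjugatesOf_of_mem_center_right (a : G) {z : G}
    (hz : z ∈ Subgroup.center G) : conjugatesOf a * conjugatesOf z = conjugatesOf (a * z) := by
  have hcomm : (· * z) = (z * ·) := funext fun g => Subgroup.mem_center_iff.mp hz g
  rw [conjugatesOf_eq_singleton_of_mem_center hz, Set.mul_singleton, hcomm,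
    image_mul_left_conjugatesOf_of_mem_center hz, Subgroup.mem_center_iff.mp hz a]

theorem MulAction.exists_isConj_smul_ne {X : Type*} [MulAction G X] [IsPretransitive G X]
    {a : G} {x : X} (hx : a • x ≠ x) (y : X) : ∃ a', IsConj a a' ∧ a' • y ≠ y := by
  obtain ⟨g, rfl⟩ := exists_smul_eq G x y
  refine ⟨g * a * g⁻¹, isConj_iff.mpr ⟨g, rfl⟩, fun h => hx ?_⟩
  rwa [mul_smul, mul_smul, inv_smul_smul, smul_left_cancel_iff] at h

end Conjugacy

open Matrix

open scoped LinearAlgebra.Projectivization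

theorem Matrix.det_one_add_vecMulVec {ι R : Type*} [Fintype ι] [DecidableEq ι] [CommRing R]
    (v w : ι → R) : det (1 + vecMulVec v w) = 1 + w ⬝ᵥ v := by
  rw [vecMulVec_eq Unit, det_one_add_replicateCol_mul_replicateRow]

section DotProduct

variable {ι K : Type*} [Fintype ι] [DecidableEq ι] [Field K]

theorem Matrix.exists_dotProduct_eq_zero_eq_one {x y : ι → K} (hy : y ∉ K ∙ x) :
    ∃ w : ι → K, w ⬝ᵥ x = 0 ∧ w ⬝ᵥ y = 1 := by
  obtain ⟨f, hfy, hfx⟩ := Submodule.exists_dual_map_eq_bot_of_notMem hy inferInstance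
  have hw (z : ι → K) : (dotProductEquiv K ι).symm f ⬝ᵥ z = f z :=
    congr($((dotProductEquiv K ι).apply_symm_apply f) z)
  have hfx : f x = 0 := by
    simpa [Submodule.map_span] using hfx
  refine ⟨(f y)⁻¹ • (dotProductEquiv K ι).symm f, ?_, ?_⟩
  · rw [smul_dotProduct, hw, hfx, smul_zero]
  · rw [smul_dotProduct, hw, smul_eq_mul, inv_mul_cancel₀ hfy]

theorem Matrix.exists_dotProduct_eq_zero_ne_zero {v a b : ι → K} (ha : a ∉ K ∙ v)
    (hb : b ∉ K ∙ v) : ∃ w : ι → K, w ⬝ᵥ v = 0 ∧ w ⬝ᵥ a ≠ 0 ∧ w ⬝ᵥ b ≠ 0 := by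
  obtain ⟨wa, hwav, hwaa⟩ := exists_dotProduct_eq_zero_eq_one ha
  obtain ⟨wb, hwbv, hwbb⟩ := exists_dotProduct_eq_zero_eq_one hb
  by_cases hwab : wa ⬝ᵥ b = 0
  · by_cases hwba : wb ⬝ᵥ a = 0
    · refine ⟨wa + wb, ?_, ?_, ?_⟩ <;> simp [add_dotProduct, *]
    · exact ⟨wb, hwbv, hwba, by simp [hwbb]⟩
  · exact ⟨wa, hwav, by simp [hwaa], hwab⟩

end DotProduct

namespace Matrix.SpecialLinearGroup

section CommRing

variable {ι R : Type*} [Fintype ι] [DecidableEq ι] [CommRing R] {v w : ι → R}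

local notation:1024 "↑ₘ" A:1024 => ((A : SpecialLinearGroup ι R) : Matrix ι ι R)

theorem exists_eq_smul_one_of_mem_center {A : SpecialLinearGroup ι R}
    (hA : A ∈ Subgroup.center _) : ∃ r : R, ↑ₘA = r • 1 := by
  obtain ⟨r, -, hr⟩ := mem_center_iff.mp hA
  exact ⟨r, by rw [← hr, smul_one_eq_diagonal]; rfl⟩

def rankOneTransvection (h : w ⬝ᵥ v = 0) (t : R) : SpecialLinearGroup ι R :=
  ⟨1 + t • vecMulVec v w, by rw [← smul_vecMulVec, det_one_add_vecMulVec, dotProduct_smul, h,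
    smul_zero, add_zero]⟩

theorem coe_rankOneTransvection (h : w ⬝ᵥ v = 0) (t : R) :
    ↑ₘ(rankOneTransvection h t) = 1 + t • vecMulVec v w :=
  rfl

theorem rankOneTransvection_inv (h : w ⬝ᵥ v = 0) (t : R) :
    (rankOneTransvection h t)⁻¹ = rankOneTransvection h (-t) := by
  refine inv_eq_of_mul_eq_one_right (Subtype.ext ?_)
  have hsq : vecMulVec v w * vecMulVec v w = 0 := by
    rw [vecMulVec_mul_vecMulVec, h, zero_smul, vecMulVec_zero]
  simp only [coe_mul, coe_rankOneTransvection, coe_one, mul_add, add_mul, one_mul, mul_one,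
    smul_mul_assoc, mul_smul_comm, hsq, smul_zero]
  module

theorem trace_rankOneTransvection_conj_mul (h : w ⬝ᵥ v = 0) (A B : SpecialLinearGroup ι R)
    (t : R) :
    trace ↑ₘ(rankOneTransvection h t * A * (rankOneTransvection h t)⁻¹ * B) =
      trace (↑ₘA * ↑ₘB) + t * (w ⬝ᵥ ((↑ₘA * ↑ₘB) *ᵥ v) - w ⬝ᵥ ((↑ₘB * ↑ₘA) *ᵥ v)) -
        t ^ 2 * ((w ⬝ᵥ (↑ₘA *ᵥ v)) * (w ⬝ᵥ (↑ₘB *ᵥ v))) := by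
  rw [rankOneTransvection_inv, coe_mul, coe_mul, coe_mul, coe_rankOneTransvection,
    coe_rankOneTransvection, neg_smul, ← sub_eq_add_neg]
  set E := vecMulVec v w
  set M := ↑ₘA
  set N := ↑ₘB
  have hEME : E * M * E = (w ⬝ᵥ (M *ᵥ v)) • E := by
    rw [vecMulVec_mul, vecMulVec_mul_vecMulVec, ← dotProduct_mulVec, vecMulVec_smul]
  have htr (P : Matrix ι ι R) : trace (E * P) = w ⬝ᵥ (P *ᵥ v) := by
    rw [vecMulVec_mul, trace_vecMulVec, dotProduct_comm, dotProduct_mulVec]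
  have expand : (1 + t • E) * M * (1 - t • E) * N
      = M * N + t • (E * (M * N)) - t • (M * (E * N)) - (t * t) • (E * M * E * N) := by
    simp only [add_mul, sub_mul, mul_sub, one_mul, mul_one, smul_mul_assoc, mul_smul_comm,
      smul_smul, smul_add]
    noncomm_ring
  rw [expand, trace_sub, trace_sub, trace_add, trace_smul, trace_smul, trace_smul, hEME,
    smul_mul_assoc, trace_smul, trace_mul_comm M (E * N), Matrix.mul_assoc, htr, htr, htr,
    smul_eq_mul, smul_eq_mul, smul_eq_mul, smul_eq_mul]
  ring

theorem exists_range_quadratic_subset_image_trace (h : w ⬝ᵥ v = 0)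
    (A B : SpecialLinearGroup ι R) :
    ∃ c₀ c₁ : R, Set.range (fun t => c₀ + t * c₁ - t ^ 2 * ((w ⬝ᵥ (↑ₘA *ᵥ v)) * (w ⬝ᵥ (↑ₘB *ᵥ v))))
      ⊆ (fun X => trace ↑ₘX) '' (conjugatesOf A * conjugatesOf B) := by
  refine ⟨trace (↑ₘA * ↑ₘB), w ⬝ᵥ ((↑ₘA * ↑ₘB) *ᵥ v) - w ⬝ᵥ ((↑ₘB * ↑ₘA) *ᵥ v), ?_⟩
  rintro _ ⟨t, rfl⟩
  exact ⟨_, Set.mul_mem_mul (isConj_iff.mpr ⟨_, rfl⟩) (IsConj.refl B),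
    trace_rankOneTransvection_conj_mul h A B t⟩

theorem ncard_image_trace_le_ncard_image_mk [Finite R] (S : Set (SpecialLinearGroup ι R)) :
    ((fun X => trace ↑ₘX) '' S).ncard ≤ (ConjClasses.mk '' S).ncard := by
  let traceOfClass : ConjClasses (SpecialLinearGroup ι R) → R :=
    Quotient.lift (fun X => trace ↑ₘX) fun X _ hXY => by
      obtain ⟨c, rfl⟩ := isConj_iff.mp hXY
      rw [coe_mul, coe_mul, trace_mul_cycle, ← coe_mul, inv_mul_cancel, coe_one, one_mul]
  calc ((fun X => trace ↑ₘX) '' S).ncard = (traceOfClass '' (ConjClasses.mk '' S)).ncard := by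
        rw [Set.image_image]; rfl
    _ ≤ _ := Set.ncard_image_le (Set.toFinite _)

end CommRing

section Field

variable {ι K : Type*} [Fintype ι] [DecidableEq ι] [Field K]

theorem exists_smul_ne_of_notMem_center {A : SpecialLinearGroup ι K}
    (hA : A ∉ Subgroup.center _) : ∃ x : ℙ K (ι → K), A • x ≠ x := by
  rw [← Projectivization.SL_mulAction_ker] at hA
  by_contra! h
  exact hA (MonoidHom.mem_ker.mpr (Equiv.ext h))

theorem smul_mk_ne_mk_iff {A : SpecialLinearGroup ι K} {v : ι → K} (hv : v ≠ 0) :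
    A • Projectivization.mk K v hv ≠ Projectivization.mk K v hv ↔ A • v ∉ K ∙ v := by
  rw [Projectivization.smul_mk, Ne, Projectivization.mk_eq_mk_iff', Submodule.mem_span_singleton]

theorem exists_isConj_smul_notMem_span {A B : SpecialLinearGroup ι K}
    (hA : A ∉ Subgroup.center _) (hB : B ∉ Subgroup.center _) :
    ∃ (A' : SpecialLinearGroup ι K) (v : ι → K), IsConj A A' ∧ A' • v ∉ K ∙ v ∧ B • v ∉ K ∙ v := by
  obtain ⟨x, hx⟩ := exists_smul_ne_of_notMem_center hA
  obtain ⟨y, hy⟩ := exists_smul_ne_of_notMem_center hB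
  obtain ⟨A', hAA', hA'⟩ := MulAction.exists_isConj_smul_ne hx y
  induction y using Projectivization.ind with
  | h v hv => exact ⟨A', v, hAA', (smul_mk_ne_mk_iff hv).mp hA', (smul_mk_ne_mk_iff hv).mp hy⟩

end Field

end Matrix.SpecialLinearGroup

theorem card_add_one_div_two_le_ncard_range_quadratic {K : Type*} [Field K] [Finite K]
    (c₀ c₁ : K) {c₂ : K} (hc₂ : c₂ ≠ 0) :
    (Nat.card K + 1) / 2 ≤ (Set.range fun t : K => c₀ + t * c₁ - t ^ 2 * c₂).ncard := by
  classical
  have := Fintype.ofFinite K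
  set f := fun t : K => c₀ + t * c₁ - t ^ 2 * c₂
  have hfib : ∀ y ∈ Finset.univ.image f, (Finset.univ.filter (f · = y)).card ≤ 2 := by
    intro y hy
    obtain ⟨s, -, rfl⟩ := Finset.mem_image.mp hy
    have hsub : Finset.univ.filter (f · = f s) ⊆ {s, c₁ / c₂ - s} := by
      intro t ht
      have hts : (t - s) * (c₁ - c₂ * (t + s)) = 0 := by
        linear_combination (Finset.mem_filter.mp ht).2
      rcases mul_eq_zero.mp hts with h | h
      · simp [sub_eq_zero.mp h]
      · have : t = c₁ / c₂ - s := by field_simp; linear_combination -h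
        simp [this]
    exact (Finset.card_le_card hsub).trans Finset.card_le_two
  have := Finset.card_le_mul_card_image Finset.univ 2 hfib
  rw [← Set.image_univ, ← Finset.coe_univ, ← Finset.coe_image, Set.ncard_coe_finset,
    Nat.card_eq_fintype_card, ← Finset.card_univ]
  omega

open Matrix.SpecialLinearGroup

theorem stmt_14_general (F : Type*) [Field F] [Fintype F] (n : ℕ)
    (A B : Matrix.SpecialLinearGroup (Fin n) F) :
    (((∃ lam : F, (A : Matrix (Fin n) (Fin n) F) = lam • (1 : Matrix (Fin n) (Fin n) F)) ∨
        (∃ lam : F, (B : Matrix (Fin n) (Fin n) F) = lam • (1 : Matrix (Fin n) (Fin n) F))) ∧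
      {X | IsConj A X} * {X | IsConj B X} = {X | IsConj (A * B) X}) ∨
    (Fintype.card F + 1) / 2 ≤ Set.ncard
      (ConjClasses.mk '' ({X | IsConj A X} * {X | IsConj B X})) := by
  by_cases hA : A ∈ Subgroup.center _
  · exact Or.inl ⟨Or.inl (exists_eq_smul_one_of_mem_center hA),
      conjugatesOf_mul_conjugatesOf_of_mem_center_left hA B⟩
  by_cases hB : B ∈ Subgroup.center _
  · exact Or.inl ⟨Or.inr (exists_eq_smul_one_of_mem_center hB),
      conjugatesOf_mul_conjugatesOf_of_mem_center_right A hB⟩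
  right
  obtain ⟨A', v, hAA', hA'v, hBv⟩ := exists_isConj_smul_notMem_span hA hB
  obtain ⟨w, hwv, hwA', hwB⟩ := exists_dotProduct_eq_zero_ne_zero hA'v hBv
  obtain ⟨c₀, c₁, hrange⟩ := exists_range_quadratic_subset_image_trace hwv A' B
  rw [← hAA'.conjugatesOf_eq] at hrange
  calc (Fintype.card F + 1) / 2
      ≤ (Set.range fun t => c₀ + t * c₁ - t ^ 2 * ((w ⬝ᵥ (A' • v)) * (w ⬝ᵥ (B • v)))).ncard := by
        rw [← Nat.card_eq_fintype_card]
        exact card_add_one_div_two_le_ncard_range_quadratic c₀ c₁ (mul_ne_zero hwA' hwB)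
    _ ≤ _ := Set.ncard_le_ncard hrange (Set.toFinite _)
    _ ≤ _ := ncard_image_trace_le_ncard_image_mk _

theorem stmt_14 (F : Type*) [Field F] [Fintype F] (n : ℕ) (hn : 2 ≤ n)
    (A B : Matrix.SpecialLinearGroup (Fin n) F) :
    (((∃ lam : F, (A : Matrix (Fin n) (Fin n) F) = lam • (1 : Matrix (Fin n) (Fin n) F)) ∨
        (∃ lam : F, (B : Matrix (Fin n) (Fin n) F) = lam • (1 : Matrix (Fin n) (Fin n) F))) ∧
      {X | IsConj A X} * {X | IsConj B X} = {X | IsConj (A * B) X}) ∨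
    (Fintype.card F + 1) / 2 ≤ Set.ncard
      (ConjClasses.mk '' ({X | IsConj A X} * {X | IsConj B X})) :=
  stmt_14_general F n A B
end

section
/- Let F be a finite field with q elements and let M, N ∈ GL(n, q) such that M = diag(M₁₁, R) and N = diag(N₁₁, S), where R is the companion matrix of x² + a₁x + a₀ and S is the companion matrix of xˢ + b_{s−1}x^{s−1} + ⋯ + b₀ with s ≥ 2, occupying the last rows and columns. For x ≠ 0 and y in F, let E(x,y) = diag(I_{n−2}, [[x, y],[0, 1]]). Then Trace(E(x,y)⁻¹ M E(x,y) · N) = (1/x)·(−b_{s−2}x² − y² − b_{s−1}xy + a₁y − a₀) + a₀ + b_{s−2} + Trace(MN). -/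
/-!
Write `E = 1 + u wᵀ` with `u = e_{n-2}` and `w = (x - 1) e_{n-2} + y e_{n-1}`. By Sherman–Morrison,
`E⁻¹ = 1 - x⁻¹ u wᵀ`, so `trace (E⁻¹ M E N) - trace (M N)` is a combination of the bilinear
forms `wᵀ A u` for `A = M, N, MN, NM`. Both companion blocks send `e_{n-2}` to `e_{n-1}`, so these
only involve the entries of `M` and `N` in rows `n-2, n-1` of column `n-1`, which are
`-a₀, -a₁` and `-b_{s-2}, -b_{s-1}`.
-/

open Matrix

namespace Matrix

variable {ι R : Type*} [Fintype ι]

theorem trace_vecMulVec_mul [CommSemiring R] (u w : ι → R) (A : Matrix ι ι R) :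
    trace (vecMulVec u w * A) = w ⬝ᵥ A *ᵥ u := by
  rw [vecMulVec_mul, trace_vecMulVec, dotProduct_comm, dotProduct_mulVec]

variable [DecidableEq ι] [Field R]

theorem inv_one_add_vecMulVec (u w : ι → R) (h : 1 + w ⬝ᵥ u ≠ 0) :
    (1 + vecMulVec u w)⁻¹ = 1 - (1 + w ⬝ᵥ u)⁻¹ • vecMulVec u w := by
  refine inv_eq_right_inv ?_
  have hsq : vecMulVec u w * vecMulVec u w = (w ⬝ᵥ u) • vecMulVec u w := by
    rw [vecMulVec_mul_vecMulVec, vecMulVec_smul]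
  calc (1 + vecMulVec u w) * (1 - (1 + w ⬝ᵥ u)⁻¹ • vecMulVec u w)
      = 1 + (1 - (1 + w ⬝ᵥ u)⁻¹ * (1 + w ⬝ᵥ u)) • vecMulVec u w := by
        rw [mul_sub, mul_one, mul_smul_comm, add_mul, one_mul, hsq]
        module
    _ = 1 := by rw [inv_mul_cancel₀ h, sub_self, zero_smul, add_zero]

theorem trace_inv_one_add_vecMulVec_mul_mul_mul (u w : ι → R) (M N : Matrix ι ι R)
    (h : 1 + w ⬝ᵥ u ≠ 0) :
    trace ((1 + vecMulVec u w)⁻¹ * M * (1 + vecMulVec u w) * N) =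
      trace (M * N) + w ⬝ᵥ (N * M) *ᵥ u -
        (1 + w ⬝ᵥ u)⁻¹ * (w ⬝ᵥ (M * N) *ᵥ u + (w ⬝ᵥ M *ᵥ u) * (w ⬝ᵥ N *ᵥ u)) := by
  set V := vecMulVec u w
  have hVMV : V * M * V = vecMulVec u ((w ⬝ᵥ M *ᵥ u) • w) := by
    rw [Matrix.mul_assoc, mul_vecMulVec, vecMulVec_mul_vecMulVec]
  have expand : (1 - (1 + w ⬝ᵥ u)⁻¹ • V) * M * (1 + V) * N =
      M * N + M * (V * N) - (1 + w ⬝ᵥ u)⁻¹ • (V * (M * N) + V * M * V * N) := by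
    simp only [sub_mul, add_mul, mul_add, one_mul, mul_one, smul_mul_assoc, Matrix.mul_assoc]
    module
  rw [inv_one_add_vecMulVec u w h, expand, trace_sub, trace_add, trace_smul, trace_add,
    trace_mul_comm M (V * N), Matrix.mul_assoc V N M, hVMV, trace_vecMulVec_mul,
    trace_vecMulVec_mul, trace_vecMulVec_mul, smul_dotProduct, smul_eq_mul, smul_eq_mul]

theorem trace_inv_one_add_vecMulVec_mul_mul_mul_of_mulVec_eq {u v w : ι → R}
    {M N : Matrix ι ι R} (hMu : M *ᵥ u = v) (hNu : N *ᵥ u = v) (h : 1 + w ⬝ᵥ u ≠ 0) :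
    trace ((1 + vecMulVec u w)⁻¹ * M * (1 + vecMulVec u w) * N) =
      trace (M * N) + w ⬝ᵥ N *ᵥ v - (1 + w ⬝ᵥ u)⁻¹ * (w ⬝ᵥ M *ᵥ v + (w ⬝ᵥ v) ^ 2) := by
  rw [trace_inv_one_add_vecMulVec_mul_mul_mul u w M N h, ← mulVec_mulVec, ← mulVec_mulVec,
    hMu, hNu, sq]

end Matrix

section Companion

variable {F : Type*} [Ring F] {n s : ℕ}

/-- `N` is block diagonal with the companion matrix of `Xˢ + b (s-1) Xˢ⁻¹ + ⋯ + b 0` in its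
bottom-right `s × s` corner. -/
def HasCompanionCorner (s : ℕ) (b : ℕ → F) (N : Matrix (Fin n) (Fin n) F) : Prop :=
  ∀ i j : Fin n, (n - s ≤ (i : ℕ) ∨ n - s ≤ (j : ℕ)) →
    N i j =
      if n - s ≤ (i : ℕ) ∧ n - s ≤ (j : ℕ) then
        (if (j : ℕ) = n - 1 then -(b ((i : ℕ) - (n - s)))
         else if (i : ℕ) = (j : ℕ) + 1 then 1 else 0)
      else 0

namespace HasCompanionCorner

variable {b : ℕ → F} {N : Matrix (Fin n) (Fin n) F} (hN : HasCompanionCorner s b N)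
  (hs : 2 ≤ s) (hsn : s ≤ n) {p q : Fin n} (hp : (p : ℕ) = n - 2) (hq : (q : ℕ) = n - 1)
include hN hs hsn hq

include hp in
theorem mulVec_single_penultimate : N *ᵥ Pi.single p 1 = Pi.single q 1 := by
  ext k
  rw [mulVec_single_one, col_apply, hN k p (Or.inr (by omega))]
  simp only [Pi.single_apply, Fin.ext_iff]
  split_ifs <;> first | rfl | omega

include hp in
theorem apply_penultimate_last : N p q = -b (s - 2) := by
  rw [hN p q (Or.inl (by omega)), if_pos (by omega), if_pos hq, hp,
    show n - 2 - (n - s) = s - 2 by omega]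

theorem apply_last_last : N q q = -b (s - 1) := by
  rw [hN q q (Or.inl (by omega)), if_pos (by omega), if_pos hq, hq,
    show n - 1 - (n - s) = s - 1 by omega]

end HasCompanionCorner

theorem hasCompanionCorner_two (hn : 2 ≤ n) {a₀ a₁ : F} {M : Matrix (Fin n) (Fin n) F}
    (hM : ∀ i j : Fin n, (n - 2 ≤ (i : ℕ) ∨ n - 2 ≤ (j : ℕ)) →
      M i j =
        if (i : ℕ) = n - 2 ∧ (j : ℕ) = n - 2 then 0
        else if (i : ℕ) = n - 1 ∧ (j : ℕ) = n - 2 then 1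
        else if (i : ℕ) = n - 2 ∧ (j : ℕ) = n - 1 then -a₀
        else if (i : ℕ) = n - 1 ∧ (j : ℕ) = n - 1 then -a₁
        else 0) :
    HasCompanionCorner 2 (fun k => if k = 0 then a₀ else a₁) M := by
  intro i j hij
  rw [hM i j hij]
  split_ifs <;> (try dsimp only) <;> (try split_ifs) <;> first | rfl | omega

theorem eq_one_add_vecMulVec_single {x y : F} {p q : Fin n} (hp : (p : ℕ) = n - 2)
    (hq : (q : ℕ) = n - 1) (hpq : p ≠ q) {E : Matrix (Fin n) (Fin n) F}
    (hE : E = fun i j : Fin n =>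
      if (i : ℕ) = n - 2 ∧ (j : ℕ) = n - 2 then x
      else if (i : ℕ) = n - 2 ∧ (j : ℕ) = n - 1 then y
      else if i = j then 1 else 0) :
    E = 1 + vecMulVec (Pi.single p 1) (Pi.single p (x - 1) + Pi.single q y) := by
  ext i j
  simp only [hE, Matrix.add_apply, one_apply, vecMulVec_apply, Pi.add_apply, Pi.single_apply,
    ← hp, ← hq, ← Fin.ext_iff]
  split_ifs <;> simp_all

end Companion

theorem stmt_16_general (F : Type*) [Field F]
    (n s : ℕ) (hs : 2 ≤ s) (hsn : s ≤ n)
    (a₀ a₁ : F) (b : ℕ → F) (x y : F) (hx : x ≠ 0)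
    (M N : Matrix (Fin n) (Fin n) F)
    -- M is block diagonal, with the companion matrix of x² + a₁x + a₀
    -- occupying the last two rows and columns:
    (hM : ∀ i j : Fin n, (n - 2 ≤ (i : ℕ) ∨ n - 2 ≤ (j : ℕ)) →
      M i j =
        if (i : ℕ) = n - 2 ∧ (j : ℕ) = n - 2 then 0
        else if (i : ℕ) = n - 1 ∧ (j : ℕ) = n - 2 then 1
        else if (i : ℕ) = n - 2 ∧ (j : ℕ) = n - 1 then -a₀
        else if (i : ℕ) = n - 1 ∧ (j : ℕ) = n - 1 then -a₁
        else 0)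
    -- N is block diagonal, with the companion matrix of
    -- xˢ + b_{s-1}x^{s-1} + ⋯ + b₀ occupying the last s rows and columns:
    (hN : ∀ i j : Fin n, (n - s ≤ (i : ℕ) ∨ n - s ≤ (j : ℕ)) →
      N i j =
        if n - s ≤ (i : ℕ) ∧ n - s ≤ (j : ℕ) then
          (if (j : ℕ) = n - 1 then -(b ((i : ℕ) - (n - s)))
           else if (i : ℕ) = (j : ℕ) + 1 then 1 else 0)
        else 0)
    (E : Matrix (Fin n) (Fin n) F)
    (hE : E = fun i j : Fin n =>
      if (i : ℕ) = n - 2 ∧ (j : ℕ) = n - 2 then x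
      else if (i : ℕ) = n - 2 ∧ (j : ℕ) = n - 1 then y
      else if i = j then 1 else 0) :
    Matrix.trace (E⁻¹ * M * E * N) =
      x⁻¹ * (-(b (s - 2)) * x ^ 2 - y ^ 2 - b (s - 1) * x * y + a₁ * y - a₀) +
        a₀ + b (s - 2) + Matrix.trace (M * N) := by
  have hn : 2 ≤ n := hs.trans hsn
  obtain ⟨p, hp⟩ : ∃ p : Fin n, (p : ℕ) = n - 2 := ⟨⟨n - 2, by omega⟩, rfl⟩
  obtain ⟨q, hq⟩ : ∃ q : Fin n, (q : ℕ) = n - 1 := ⟨⟨n - 1, by omega⟩, rfl⟩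
  have hpq : p ≠ q := by rw [ne_eq, Fin.ext_iff, hp, hq]; omega
  have hM₂ := hasCompanionCorner_two hn hM
  have hN' : HasCompanionCorner s b N := hN
  have hwu : 1 + (Pi.single p (x - 1) + Pi.single q y) ⬝ᵥ Pi.single p 1 = x := by
    simp [hpq.symm]
  rw [eq_one_add_vecMulVec_single hp hq hpq hE,
    trace_inv_one_add_vecMulVec_mul_mul_mul_of_mulVec_eq
      (hM₂.mulVec_single_penultimate le_rfl hn hp hq)
      (hN'.mulVec_single_penultimate hs hsn hp hq) (by rwa [hwu]), hwu]
  simp only [mulVec_single_one, add_dotProduct, single_dotProduct, col_apply,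
    hM₂.apply_penultimate_last le_rfl hn hp hq, hM₂.apply_last_last le_rfl hn hq,
    hN'.apply_penultimate_last hs hsn hp hq, hN'.apply_last_last hs hsn hq]
  simp only [mul_neg, ↓reduceIte, Nat.add_one_sub_one, one_ne_zero, ne_eq, hpq.symm,
    not_false_eq_true, Pi.single_eq_of_ne', mul_zero, Pi.single_eq_same, mul_one, zero_add,
    neg_mul]
  field_simp
  ring

/-- Трace formula for `E(x,y)⁻¹ * M * E(x,y) * N` where `M = diag(M₁₁, R)` with `R`
the companion matrix of `x² + a₁x + a₀` and `N = diag(N₁₁, S)` with `S` the companion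
matrix of `xˢ + b_{s-1}x^{s-1} + ⋯ + b₀`, `s ≥ 2`, in the bottom-right corners. -/
theorem stmt_16 (F : Type*) [Field F] [Fintype F] [DecidableEq F]
    (n s : ℕ) (hn : 2 ≤ n) (hs : 2 ≤ s) (hsn : s ≤ n)
    (a₀ a₁ : F) (b : ℕ → F) (x y : F) (hx : x ≠ 0)
    (M N : Matrix (Fin n) (Fin n) F) (hMu : IsUnit M) (hNu : IsUnit N)
    -- M is block diagonal, with the companion matrix of x² + a₁x + a₀
    -- occupying the last two rows and columns:
    (hM : ∀ i j : Fin n, (n - 2 ≤ (i : ℕ) ∨ n - 2 ≤ (j : ℕ)) →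
      M i j =
        if (i : ℕ) = n - 2 ∧ (j : ℕ) = n - 2 then 0
        else if (i : ℕ) = n - 1 ∧ (j : ℕ) = n - 2 then 1
        else if (i : ℕ) = n - 2 ∧ (j : ℕ) = n - 1 then -a₀
        else if (i : ℕ) = n - 1 ∧ (j : ℕ) = n - 1 then -a₁
        else 0)
    -- N is block diagonal, with the companion matrix of
    -- xˢ + b_{s-1}x^{s-1} + ⋯ + b₀ occupying the last s rows and columns:
    (hN : ∀ i j : Fin n, (n - s ≤ (i : ℕ) ∨ n - s ≤ (j : ℕ)) →
      N i j =
        if n - s ≤ (i : ℕ) ∧ n - s ≤ (j : ℕ) then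
          (if (j : ℕ) = n - 1 then -(b ((i : ℕ) - (n - s)))
           else if (i : ℕ) = (j : ℕ) + 1 then 1 else 0)
        else 0)
    (E : Matrix (Fin n) (Fin n) F)
    (hE : E = fun i j : Fin n =>
      if (i : ℕ) = n - 2 ∧ (j : ℕ) = n - 2 then x
      else if (i : ℕ) = n - 2 ∧ (j : ℕ) = n - 1 then y
      else if i = j then 1 else 0) :
    Matrix.trace (E⁻¹ * M * E * N) =
      x⁻¹ * (-(b (s - 2)) * x ^ 2 - y ^ 2 - b (s - 1) * x * y + a₁ * y - a₀) +
        a₀ + b (s - 2) + Matrix.trace (M * N) :=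
  stmt_16_general F n s hs hsn a₀ a₁ b x y hx M N hM hN E hE
end

section
/- Let F be a finite field with q elements, M ∈ GL(n, q) of the block form diag(M₁₁, R) where R is an r×r companion matrix (r ≥ 2) with last column entries determined by coefficients a₀,…,a_{r−1}, and N₁ = diag(I_{n−2}, diag(u, v)) with u ≠ v. For y ∈ F let E(1,y) = diag(I_{n−2}, [[1, y],[0, 1]]). Then Trace(E(1,y)⁻¹ M E(1,y) · N₁) = y·(v − u) + Trace(M N₁), and in particular as y ranges over F this trace takes all q values of F. -/
/-! `E(1,y)` is the transvection `1 + y • e_{n-2,n-1}`, and conjugating by it changes only the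
diagonal entries at `n-2` and `n-1`, by `∓ y * M_{n-1,n-2}`. Against the diagonal matrix `N₁`
the trace therefore moves by `y * M_{n-1,n-2} * (v - u)`, and `M_{n-1,n-2} = 1` is a
subdiagonal entry of the companion block since `r ≥ 2`. Surjectivity follows as `v - u ≠ 0`. -/

namespace Matrix

variable {n R : Type*} [Fintype n] [DecidableEq n]

theorem inv_transvection [CommRing R] {i j : n} (hij : i ≠ j) (c : R) :
    (transvection i j c)⁻¹ = transvection i j (-c) :=
  inv_eq_left_inv <| by rw [transvection_mul_transvection_same i j hij, neg_add_cancel,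
    transvection_zero]

theorem trace_mul_diagonal [NonUnitalNonAssocSemiring R] (X : Matrix n n R) (d : n → R) :
    trace (X * diagonal d) = ∑ k, X k k * d k := by
  simp [trace, mul_diagonal]

theorem transvection_conj_apply_self [CommRing R] {i j : n} (hij : i ≠ j) (c : R)
    (M : Matrix n n R) (k : n) :
    (transvection i j (-c) * M * transvection i j c) k k =
      M k k + ((if k = j then c * M j i else 0) - if k = i then c * M j i else 0) := by
  by_cases hki : k = i
  · subst hki
    simp [hij]
  by_cases hkj : k = j
  · subst hkj
    simp [hki]
  · simp [hki, hkj]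

theorem trace_transvection_conj_mul_diagonal [CommRing R] {i j : n} (hij : i ≠ j) (c : R)
    (M : Matrix n n R) (d : n → R) :
    trace ((transvection i j c)⁻¹ * M * transvection i j c * diagonal d) =
      c * M j i * (d j - d i) + trace (M * diagonal d) := by
  simp only [inv_transvection hij, trace_mul_diagonal, transvection_conj_apply_self hij,
    add_mul, sub_mul, ite_mul, zero_mul, Finset.sum_add_distrib, Finset.sum_sub_distrib,
    Finset.sum_ite_eq', Finset.mem_univ, if_true]
  ring

end Matrix

theorem stmt_17_general (F : Type*) [Field F]
    (n r : ℕ) (hn : 2 ≤ n) (hr : 2 ≤ r)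
    (a : ℕ → F) (u v : F) (huv : u ≠ v)
    (M : Matrix (Fin n) (Fin n) F)
    -- M is block diagonal, with the companion matrix of
    -- xʳ + a_{r-1}x^{r-1} + ⋯ + a₀ occupying the last r rows and columns:
    (hM : ∀ i j : Fin n, (n - r ≤ (i : ℕ) ∨ n - r ≤ (j : ℕ)) →
      M i j =
        if n - r ≤ (i : ℕ) ∧ n - r ≤ (j : ℕ) then
          (if (j : ℕ) = n - 1 then -(a ((i : ℕ) - (n - r)))
           else if (i : ℕ) = (j : ℕ) + 1 then 1 else 0)
        else 0)
    (N₁ : Matrix (Fin n) (Fin n) F)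
    (hN₁ : N₁ = fun i j : Fin n =>
      if i = j then
        (if (i : ℕ) = n - 2 then u else if (i : ℕ) = n - 1 then v else 1)
      else 0)
    (E : F → Matrix (Fin n) (Fin n) F)
    (hE : ∀ y : F, E y = fun i j : Fin n =>
      if (i : ℕ) = n - 2 ∧ (j : ℕ) = n - 1 then y
      else if i = j then 1 else 0) :
    (∀ y : F, Matrix.trace ((E y)⁻¹ * M * E y * N₁) =
        y * (v - u) + Matrix.trace (M * N₁)) ∧
    (∀ t : F, ∃ y : F, Matrix.trace ((E y)⁻¹ * M * E y * N₁) = t) := by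
  set i₀ : Fin n := ⟨n - 2, by omega⟩
  set j₀ : Fin n := ⟨n - 1, by omega⟩
  have hij : i₀ ≠ j₀ := by simp [i₀, j₀, Fin.ext_iff]; omega
  set d : Fin n → F := fun k => if (k : ℕ) = n - 2 then u else if (k : ℕ) = n - 1 then v else 1
  have hN : N₁ = Matrix.diagonal d := hN₁
  have hEy (y : F) : E y = Matrix.transvection i₀ j₀ y := by
    ext i j
    by_cases hi : i = i₀ <;> by_cases hj : j = j₀ <;>
      simp_all [Matrix.transvection, Matrix.one_apply, Matrix.single_apply, i₀, j₀, Fin.ext_iff,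
        eq_comm]
  have hMji : M j₀ i₀ = 1 := by
    rw [hM j₀ i₀ (by simp [j₀]; omega)]
    simp only [i₀, j₀]
    rw [if_pos (by omega), if_neg (by omega), if_pos (by omega)]
  have hd : d j₀ - d i₀ = v - u := by simp [d, i₀, j₀, show n - 1 ≠ n - 2 by omega]
  have htrace (y : F) :
      Matrix.trace ((E y)⁻¹ * M * E y * N₁) = y * (v - u) + Matrix.trace (M * N₁) := by
    rw [hEy, hN, Matrix.trace_transvection_conj_mul_diagonal hij, hMji, mul_one, hd]
  refine ⟨htrace, fun t => ⟨(t - Matrix.trace (M * N₁)) / (v - u), ?_⟩⟩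
  rw [htrace, div_mul_cancel₀ _ (sub_ne_zero.2 huv.symm), sub_add_cancel]

/-- Trace formula for `E(1,y)⁻¹ * M * E(1,y) * N₁` where `M = diag(M₁₁, R)` with `R`
the `r × r` companion matrix of `xʳ + a_{r-1}x^{r-1} + ⋯ + a₀` (`r ≥ 2`) in the
bottom-right corner, and `N₁ = diag(I_{n-2}, diag(u, v))` with `u ≠ v`. -/
theorem stmt_17 (F : Type*) [Field F] [Fintype F] [DecidableEq F]
    (n r : ℕ) (hn : 2 ≤ n) (hr : 2 ≤ r) (hrn : r ≤ n)
    (a : ℕ → F) (u v : F) (huv : u ≠ v)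
    (M : Matrix (Fin n) (Fin n) F) (hMu : IsUnit M)
    -- M is block diagonal, with the companion matrix of
    -- xʳ + a_{r-1}x^{r-1} + ⋯ + a₀ occupying the last r rows and columns:
    (hM : ∀ i j : Fin n, (n - r ≤ (i : ℕ) ∨ n - r ≤ (j : ℕ)) →
      M i j =
        if n - r ≤ (i : ℕ) ∧ n - r ≤ (j : ℕ) then
          (if (j : ℕ) = n - 1 then -(a ((i : ℕ) - (n - r)))
           else if (i : ℕ) = (j : ℕ) + 1 then 1 else 0)
        else 0)
    (N₁ : Matrix (Fin n) (Fin n) F)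
    (hN₁ : N₁ = fun i j : Fin n =>
      if i = j then
        (if (i : ℕ) = n - 2 then u else if (i : ℕ) = n - 1 then v else 1)
      else 0)
    (E : F → Matrix (Fin n) (Fin n) F)
    (hE : ∀ y : F, E y = fun i j : Fin n =>
      if (i : ℕ) = n - 2 ∧ (j : ℕ) = n - 1 then y
      else if i = j then 1 else 0) :
    (∀ y : F, Matrix.trace ((E y)⁻¹ * M * E y * N₁) =
        y * (v - u) + Matrix.trace (M * N₁)) ∧
    (∀ t : F, ∃ y : F, Matrix.trace ((E y)⁻¹ * M * E y * N₁) = t) :=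
  stmt_17_general F n r hn hr a u v huv M hM N₁ hN₁ E hE
end
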